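/- arXiv:2604.12685 — 6 statements merged into one kernel-verified Lean document; each statement's English description precedes it below -/
import Mathlib

section
/- Let C be a 2×2 real matrix with row sums equal to 1 (C·1 = 1), strictly positive diagonal entries, spectral radius 1 with 1 a simple dominant eigenvalue, and a strictly positive normalized left eigenvector at eigenvalue 1. Then all entries of C are nonnegative. -/
open Matrix

lemma aux_mem_spec {M : Matrix (Fin 2) (Fin 2) ℂ} {μ : ℂ} {v : Fin 2 → ℂ}
    (hv : v ≠ 0) (h : M *ᵥ v = μ • v) : μ ∈ spectrum ℂ M := by
  rw [← AlgEquiv.spectrum_eq (Matrix.toLinAlgEquiv' (R := ℂ) (n := Fin 2)),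
    ← Module.End.hasEigenvalue_iff_mem_spectrum]
  refine Module.End.hasEigenvalue_of_hasEigenvector ⟨?_, hv⟩
  rw [Module.End.mem_eigenspace_iff]
  simpa [Matrix.toLinAlgEquiv'_apply] using h

/-- A 2×2 real matrix with unit row sums, positive diagonal, spectral radius 1 with
1 a simple dominant eigenvalue, and a strictly positive normalized left eigenvector
at eigenvalue 1, has all entries nonnegative. -/
theorem stmt0 (C : Matrix (Fin 2) (Fin 2) ℝ)
    (hrow : C *ᵥ (fun _ => 1) = fun _ => 1)
    (hdiag : ∀ i, 0 < C i i)
    (hspec1 : (1 : ℂ) ∈ spectrum ℂ (C.map Complex.ofReal))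
    (hρ : ∀ μ ∈ spectrum ℂ (C.map Complex.ofReal), ‖μ‖ ≤ 1)
    (hsimple : ((C.map Complex.ofReal).charpoly).rootMultiplicity 1 = 1)
    (hdom : ∀ μ ∈ spectrum ℂ (C.map Complex.ofReal), μ ≠ 1 → ‖μ‖ < 1)
    (p : Fin 2 → ℝ)
    (hpeig : p ᵥ* C = p) (hpnorm : ∑ i, p i = 1) (hppos : ∀ i, 0 < p i) :
    ∀ i j, 0 ≤ C i j := by
  -- row sums
  have hr0 := congrFun hrow 0
  have hr1 := congrFun hrow 1
  simp [Matrix.mulVec, dotProduct, Fin.sum_univ_two] at hr0 hr1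
  -- left eigenvector column 0
  have hp0 := congrFun hpeig 0
  simp [Matrix.vecMul, dotProduct, Fin.sum_univ_two] at hp0
  have hsame : p 1 * C 1 0 = p 0 * C 0 1 := by linear_combination hp0 - p 0 * hr0
  -- same sign of off-diagonals
  have key : ¬ (C 0 1 < 0 ∧ C 1 0 < 0) := by
    rintro ⟨h01, h10⟩
    set μ : ℝ := C 0 0 - C 1 0 with hμ
    have hμgt : 1 < μ := by nlinarith [hr0]
    -- eigenvector (C 0 1, -C 1 0)
    set v : Fin 2 → ℂ := ![(C 0 1 : ℂ), (-(C 1 0) : ℂ)] with hv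
    have hvne : v ≠ 0 := by
      intro h
      have := congrFun h 0
      simp [hv] at this
      exact absurd this (by exact_mod_cast h01.ne)
    have heig : (C.map Complex.ofReal) *ᵥ v = (μ : ℂ) • v := by
      funext i
      fin_cases i <;>
        · simp [hv, Matrix.mulVec, dotProduct, Fin.sum_univ_two, Matrix.map_apply]
          push_cast
          ring_nf
          norm_cast
          nlinarith [hr0, hr1]
    have := hρ (μ : ℂ) (aux_mem_spec hvne heig)
    rw [Complex.norm_real] at this
    have : |μ| ≤ 1 := this
    rw [abs_le] at this
    linarith [this.2]
  have h1 : 0 ≤ C 0 1 := by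
    by_contra h
    push_neg at h
    have h2 : C 1 0 < 0 := by nlinarith [hsame, hppos 0, hppos 1]
    exact key ⟨h, h2⟩
  have h2 : 0 ≤ C 1 0 := by
    by_contra h
    push_neg at h
    nlinarith [hsame, hppos 0, hppos 1, h1]
  intro i j
  fin_cases i <;> fin_cases j
  · exact (hdiag 0).le
  · exact h1
  · exact h2
  · exact (hdiag 1).le
end

section
/- Let R ∈ ℝ^{n×n} satisfy R·1 = 1, have 1 as a simple eigenvalue with normalized left eigenvector r (r^T R = r^T, r^T 1 = 1), and diag(R) = 0. Suppose that for every i, the matrix Q_i − Π_i has spectral radius strictly less than 1, where Q_i := diag(e_i) + (I − diag(e_i))R and Π_i := 1·e_i^T. Then r is strictly positive. -/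
open Matrix

lemma det_ne_zero_aux {n : ℕ} (M : Matrix (Fin n) (Fin n) ℝ)
    (h : ∀ μ ∈ spectrum ℂ (M.map Complex.ofReal), ‖μ‖ < 1)
    {t : ℝ} (ht0 : 0 ≤ t) (ht1 : t ≤ 1) : ((1 : Matrix (Fin n) (Fin n) ℝ) - t • M).det ≠ 0 := by
  rcases eq_or_lt_of_le ht0 with rfl | htpos
  · simp
  intro hdet
  have htne : (t:ℂ) ≠ 0 := by exact_mod_cast htpos.ne'
  have hmap : ((1 - t • M).map (Complex.ofReal)) = 1 - (t:ℂ) • M.map Complex.ofReal := by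
    ext j k
    by_cases hjk : j = k <;>
      simp [Matrix.map_apply, Matrix.one_apply, hjk]
  have hdetC : ((1:Matrix (Fin n) (Fin n) ℂ) - (t:ℂ) • M.map Complex.ofReal).det = 0 := by
    rw [← hmap]
    have : ((1 - t • M).map Complex.ofReal).det
        = (Complex.ofRealHom.mapMatrix (1 - t • M)).det := rfl
    rw [this, ← RingHom.map_det, hdet]
    simp
  have hc : ((t:ℂ)⁻¹) ∈ spectrum ℂ (M.map Complex.ofReal) := by
    rw [spectrum.mem_iff, Algebra.algebraMap_eq_smul_one, Matrix.isUnit_iff_isUnit_det]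
    have heq : ((t:ℂ)⁻¹ • (1:Matrix (Fin n) (Fin n) ℂ) - M.map Complex.ofReal)
        = (t:ℂ)⁻¹ • ((1:Matrix (Fin n) (Fin n) ℂ) - (t:ℂ) • M.map Complex.ofReal) := by
      rw [smul_sub, smul_smul, inv_mul_cancel₀ htne, one_smul]
    rw [heq, Matrix.det_smul, hdetC, mul_zero]
    exact fun hu => hu.ne_zero rfl
  have hlt := h _ hc
  have : ‖((t:ℂ)⁻¹)‖ = t⁻¹ := by
    rw [norm_inv, Complex.norm_real, Real.norm_eq_abs, abs_of_pos htpos]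
  rw [this] at hlt
  have : (1:ℝ) ≤ t⁻¹ := one_le_inv_iff₀.2 ⟨htpos, ht1⟩
  linarith

lemma det_pos_of_spec {n : ℕ} (M : Matrix (Fin n) (Fin n) ℝ)
    (h : ∀ μ ∈ spectrum ℂ (M.map Complex.ofReal), ‖μ‖ < 1) :
    0 < ((1 : Matrix (Fin n) (Fin n) ℝ) - M).det := by
  by_contra hle
  push_neg at hle
  have h1 : ((1 : Matrix (Fin n) (Fin n) ℝ) - (1:ℝ) • M).det ≠ 0 :=
    det_ne_zero_aux M h zero_le_one le_rfl
  rw [one_smul] at h1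
  have hlt : ((1 : Matrix (Fin n) (Fin n) ℝ) - M).det < 0 := lt_of_le_of_ne hle h1
  have hcont : ContinuousOn (fun t : ℝ => ((1 : Matrix (Fin n) (Fin n) ℝ) - t • M).det)
      (Set.Icc 0 1) :=
    ((continuous_const.sub (continuous_id.smul continuous_const)).matrix_det).continuousOn
  have him := intermediate_value_Icc' (zero_le_one (α := ℝ)) hcont
  have h0mem : (0:ℝ) ∈ Set.Icc (((1 : Matrix (Fin n) (Fin n) ℝ) - (1:ℝ) • M).det)
      (((1 : Matrix (Fin n) (Fin n) ℝ) - (0:ℝ) • M).det) := by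
    simp only [one_smul, zero_smul, sub_zero, Matrix.det_one]
    exact ⟨hlt.le, zero_le_one⟩
  obtain ⟨t, ht, hft⟩ := him h0mem
  exact det_ne_zero_aux M h ht.1 ht.2 hft

/-- Under the single-leader contractivity spectral condition, the normalized left
eigenvector r of R at the simple eigenvalue 1 is strictly positive. -/
theorem stmt3 {n : ℕ} (R : Matrix (Fin n) (Fin n) ℝ) (r : Fin n → ℝ)
    (hrow : R *ᵥ (fun _ => 1) = fun _ => 1)
    (hdiag : ∀ i, R i i = 0)
    (hsimple : R.charpoly.rootMultiplicity 1 = 1)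
    (hr : r ᵥ* R = r) (hrnorm : ∑ i, r i = 1)
    (hQ : ∀ i : Fin n, ∀ μ ∈ spectrum ℂ
        (((Matrix.diagonal (fun j => if j = i then (1:ℝ) else 0)
            + (1 - Matrix.diagonal (fun j => if j = i then (1:ℝ) else 0)) * R
            - vecMulVec (fun _ => 1) (fun j => if j = i then 1 else 0)).map
              Complex.ofReal)), ‖μ‖ < 1) :
    ∀ i, 0 < r i := by
  intro i₀
  have hne : Nonempty (Fin n) := ⟨i₀⟩
  set Mi : Fin n → Matrix (Fin n) (Fin n) ℝ := fun i =>
    Matrix.diagonal (fun j => if j = i then (1:ℝ) else 0)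
      + (1 - Matrix.diagonal (fun j => if j = i then (1:ℝ) else 0)) * R
      - vecMulVec (fun _ => 1) (fun j => if j = i then 1 else 0) with hMi
  have hdetB : ∀ i, 0 < ((1 : Matrix (Fin n) (Fin n) ℝ) - Mi i).det := fun i =>
    det_pos_of_spec _ (hQ i)
  -- mulVec computation
  have hMv : ∀ (i : Fin n) (v : Fin n → ℝ), R *ᵥ v = v →
      ((1 : Matrix (Fin n) (Fin n) ℝ) - Mi i) *ᵥ v = fun _ => v i := by
    intro i v hv
    have hMiv : Mi i *ᵥ v = v - fun _ => v i := by
      rw [hMi]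
      simp only
      rw [Matrix.sub_mulVec, Matrix.add_mulVec, ← Matrix.mulVec_mulVec, hv,
        Matrix.sub_mulVec, Matrix.one_mulVec]
      funext j
      have hvmv : (vecMulVec (fun _ => (1:ℝ)) (fun j => if j = i then (1:ℝ) else 0) *ᵥ v) j
          = v i := by
        simp [Matrix.vecMulVec, Matrix.mulVec, dotProduct, ite_mul]
      simp [hvmv, Matrix.mulVec_diagonal]
    rw [Matrix.sub_mulVec, Matrix.one_mulVec, hMiv]
    funext j
    simp
  have hconst : ∀ (a : ℝ), R *ᵥ (fun _ => a) = fun _ => a := by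
    intro a
    have h1 : (fun _ => a : Fin n → ℝ) = a • (fun _ => (1:ℝ)) := by funext j; simp
    rw [h1, Matrix.mulVec_smul, hrow]
  have hker : ∀ v : Fin n → ℝ, R *ᵥ v = v → ∀ i, v = fun _ => v i := by
    intro v hv i
    have h1 := hMv i v hv
    have h2 := hMv i (fun _ => v i) (hconst (v i))
    have hu : IsUnit ((1 : Matrix (Fin n) (Fin n) ℝ) - Mi i) :=
      (Matrix.isUnit_iff_isUnit_det _).2 (isUnit_iff_ne_zero.2 (hdetB i).ne')
    have hinj := Matrix.mulVec_injective_iff_isUnit.2 hu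
    exact hinj (h1.trans h2.symm)
  set A : Matrix (Fin n) (Fin n) ℝ := 1 - R with hAdef
  have hA1 : A *ᵥ (fun _ => (1:ℝ)) = 0 := by
    rw [hAdef, Matrix.sub_mulVec, Matrix.one_mulVec, hrow]; simp
  have hAker : ∀ v : Fin n → ℝ, A *ᵥ v = 0 → R *ᵥ v = v := by
    intro v hv
    rw [hAdef, Matrix.sub_mulVec, Matrix.one_mulVec, sub_eq_zero] at hv
    exact hv.symm
  have hdetA : A.det = 0 := by
    rw [← Matrix.exists_mulVec_eq_zero_iff]
    refine ⟨fun _ => 1, ?_, hA1⟩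
    intro h; exact one_ne_zero (congrFun h i₀)
  have hAG : A * adjugate A = 0 := by rw [Matrix.mul_adjugate, hdetA, zero_smul]
  have hGA : adjugate A * A = 0 := by rw [Matrix.adjugate_mul, hdetA, zero_smul]
  set c : Fin n → ℝ := fun k => adjugate A k k with hc
  have hGentry : ∀ j k, adjugate A j k = c k := by
    intro j k
    have hcol : A *ᵥ (fun l => adjugate A l k) = 0 := by
      funext m
      have h0 := congrFun (congrFun hAG m) k
      simpa [Matrix.mul_apply, Matrix.mulVec, dotProduct] using h0
    have h1 := hker _ (hAker _ hcol) k
    exact congrFun h1 j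
  -- diagonal entries of adjugate are positive
  have hcpos : ∀ k, 0 < c k := by
    intro k
    have h2 : ((1 : Matrix (Fin n) (Fin n) ℝ) - Mi k).det
        = (A.updateRow k (Pi.single k 1)).det := by
      apply Matrix.det_eq_of_forall_row_eq_smul_add_const
        (fun j => if j = k then 0 else 1) k (by simp)
      intro j l
      rcases eq_or_ne j k with rfl | hjk
      · simp [hMi, Matrix.one_apply, Matrix.diagonal_apply, Matrix.vecMulVec_apply,
          Matrix.sub_mul, Matrix.one_mul, Matrix.diagonal_mul, Matrix.updateRow_self,
          Pi.single_apply, eq_comm]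
      · simp [hMi, Matrix.one_apply, Matrix.diagonal_apply, Matrix.vecMulVec_apply,
          Matrix.sub_mul, Matrix.one_mul, Matrix.diagonal_mul, hjk,
          Matrix.updateRow_apply, Pi.single_apply, eq_comm, Ne.symm hjk, hAdef,
          Matrix.sub_apply]
        ring
    have h3 := hdetB k
    rw [h2, ← Matrix.adjugate_apply] at h3
    exact h3
  have hcA : c ᵥ* A = 0 := by
    funext k
    have h0 := congrFun (congrFun hGA i₀) k
    have : (c ᵥ* A) k = (adjugate A * A) i₀ k := by
      simp only [Matrix.vecMul, Matrix.mul_apply, dotProduct]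
      exact Finset.sum_congr rfl fun l _ => by rw [hGentry i₀ l]
    rw [this, h0]; rfl
  -- kernel dimensions
  have hkerA : LinearMap.ker A.mulVecLin = Submodule.span ℝ {(fun _ => (1:ℝ) : Fin n → ℝ)} := by
    apply le_antisymm
    · intro v hv
      have hv' : A *ᵥ v = 0 := hv
      rw [Submodule.mem_span_singleton]
      refine ⟨v i₀, ?_⟩
      rw [hker v (hAker v hv') i₀]
      funext j; simp
    · rw [Submodule.span_le, Set.singleton_subset_iff]
      exact hA1
  have hone_ne : (fun _ => (1:ℝ) : Fin n → ℝ) ≠ 0 := by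
    intro h; exact one_ne_zero (congrFun h i₀)
  have hfr1 : Module.finrank ℝ (LinearMap.ker A.mulVecLin) = 1 := by
    rw [hkerA]; exact finrank_span_singleton hone_ne
  have hrn := LinearMap.finrank_range_add_finrank_ker A.mulVecLin
  rw [hfr1, Module.finrank_fin_fun] at hrn
  have hrnT := LinearMap.finrank_range_add_finrank_ker Aᵀ.mulVecLin
  rw [Module.finrank_fin_fun] at hrnT
  have hrkT : Aᵀ.rank = A.rank := Matrix.rank_transpose A
  have hkerAT : Module.finrank ℝ (LinearMap.ker Aᵀ.mulVecLin) = 1 := by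
    have e1 : Module.finrank ℝ (LinearMap.range Aᵀ.mulVecLin) = Aᵀ.rank := rfl
    have e2 : Module.finrank ℝ (LinearMap.range A.mulVecLin) = A.rank := rfl
    rw [e1, hrkT, ← e2] at hrnT
    omega
  have hrK : r ∈ LinearMap.ker Aᵀ.mulVecLin := by
    rw [LinearMap.mem_ker]
    show Aᵀ *ᵥ r = 0
    rw [Matrix.mulVec_transpose, hAdef, Matrix.vecMul_sub, Matrix.vecMul_one, hr, sub_self]
  have hcK : c ∈ LinearMap.ker Aᵀ.mulVecLin := by
    rw [LinearMap.mem_ker]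
    show Aᵀ *ᵥ c = 0
    rw [Matrix.mulVec_transpose, hcA]
  have hrne : r ≠ 0 := by
    intro h; rw [h] at hrnorm; simp at hrnorm
  have hspan : Submodule.span ℝ {r} = LinearMap.ker Aᵀ.mulVecLin := by
    apply Submodule.eq_of_le_of_finrank_eq
    · rw [Submodule.span_le, Set.singleton_subset_iff]; exact hrK
    · rw [finrank_span_singleton hrne, hkerAT]
  obtain ⟨γ, hγ⟩ := Submodule.mem_span_singleton.1 (hspan ▸ hcK)
  have hγsum : γ = ∑ k, c k := by
    have : ∑ k, c k = γ * ∑ k, r k := by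
      rw [← hγ, Finset.mul_sum]
      exact Finset.sum_congr rfl fun k _ => rfl
    rw [this, hrnorm, mul_one]
  have hγpos : 0 < γ := by
    rw [hγsum]
    exact Finset.sum_pos (fun k _ => hcpos k) Finset.univ_nonempty
  have hci : γ * r i₀ = c i₀ := congrFun hγ i₀
  have := hcpos i₀
  rcases lt_trichotomy (r i₀) 0 with hlt | heq | hgt
  · nlinarith [hcpos i₀]
  · rw [heq, mul_zero] at hci; exact absurd hci ((hcpos i₀).ne)
  · exact hgt
end

section
/- Let R ∈ ℝ^{n×n} satisfy R·1 = 1, diag(R) = 0, have 1 as a simple eigenvalue with strictly positive normalized left eigenvector r > 0, r^T 1 = 1. For x in the simplex Δ_n with x not a vertex, define W(x) := diag(x) + (I − diag(x))R. Then any row vector α with α^T W(x) = α^T and α^T 1 = 1 satisfies α_i = (r_i/(1−x_i)) / Σ_j (r_j/(1−x_j)) for all i. -/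
open Matrix

/-! The substitution `β i = α i (1 - x i)` turns `α ᵥ* W(x) = α` into `β ᵥ* R = β`. Since `1` is a
simple root of the characteristic polynomial of `R`, the left fixed vectors of `R` form the line
through `r`, so `α i` is proportional to `r i / (1 - x i)`, where `x i < 1` because `x` is not
a vertex. The normalization `∑ i, α i = 1` fixes the constant. -/

theorem Matrix.exists_eq_smul_of_vecMul_eq_self {K ι : Type*} [Field K] [Fintype ι] [DecidableEq ι]
    {A : Matrix ι ι K} (hA : A.charpoly.rootMultiplicity 1 = 1) {r v : ι → K} (hr0 : r ≠ 0)
    (hr : r ᵥ* A = r) (hv : v ᵥ* A = v) : ∃ c : K, v = c • r := by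
  have mem_eigenspace {w : ι → K} (hw : w ᵥ* A = w) : w ∈ Module.End.eigenspace (toLin' Aᵀ) 1 := by
    rw [Module.End.mem_eigenspace_iff, toLin'_apply, mulVec_transpose, hw, one_smul]
  have hdim : Module.finrank K (Module.End.eigenspace (toLin' Aᵀ) 1) ≤ 1 := by
    simpa [charpoly_toLin', hA] using LinearMap.finrank_eigenspace_le (toLin' Aᵀ) 1
  have hline : K ∙ r = Module.End.eigenspace (toLin' Aᵀ) 1 :=
    Submodule.eq_of_le_of_finrank_le
      ((Submodule.span_singleton_le_iff_mem _ _).mpr (mem_eigenspace hr))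
      (by rwa [finrank_span_singleton hr0])
  obtain ⟨c, hc⟩ := Submodule.mem_span_singleton.mp (hline ▸ mem_eigenspace hv)
  exact ⟨c, hc.symm⟩

section stdSimplex

variable {𝕜 ι : Type*} [CommRing 𝕜] [LinearOrder 𝕜] [IsStrictOrderedRing 𝕜] [Fintype ι]
  [DecidableEq ι] {x : ι → 𝕜} {i : ι}

theorem eq_single_of_mem_stdSimplex_of_apply_eq_one (hx : x ∈ stdSimplex 𝕜 ι) (hxi : x i = 1) :
    x = Pi.single i 1 := by
  have hrest : ∑ j ∈ Finset.univ.erase i, x j = 0 := by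
    linarith [Finset.add_sum_erase Finset.univ x (Finset.mem_univ i), hx.2]
  ext j
  by_cases hji : j = i
  · subst hji
    simp [hxi]
  · rw [Pi.single_eq_of_ne hji]
    exact (Finset.sum_eq_zero_iff_of_nonneg fun k _ => hx.1 k).mp hrest j
      (Finset.mem_erase.mpr ⟨hji, Finset.mem_univ j⟩)

theorem apply_lt_one_of_mem_stdSimplex (hx : x ∈ stdSimplex 𝕜 ι) (hxv : x ≠ Pi.single i 1) :
    x i < 1 := by
  have hle : x i ≤ 1 := hx.2 ▸ Finset.single_le_sum (fun j _ => hx.1 j) (Finset.mem_univ i)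
  exact hle.lt_of_ne fun hxi => hxv (eq_single_of_mem_stdSimplex_of_apply_eq_one hx hxi)

end stdSimplex

theorem Matrix.vecMul_diagonal_add_one_sub_diagonal_mul_eq_self_iff {R ι : Type*} [CommRing R]
    [Fintype ι] [DecidableEq ι] (A : Matrix ι ι R) (x α : ι → R) :
    α ᵥ* (diagonal x + (1 - diagonal x) * A) = α ↔ (α * (1 - x)) ᵥ* A = α * (1 - x) := by
  have hsplit : α ᵥ* (1 - diagonal x) = α * (1 - x) := by
    ext j
    simp [vecMul_sub, vecMul_diagonal, mul_sub]
  have hα : α * x + α * (1 - x) = α := by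
    rw [← mul_add, add_sub_cancel, mul_one]
  rw [vecMul_add, ← vecMul_vecMul, hsplit, funext (vecMul_diagonal α x)]
  conv_lhs => rhs; rw [← hα]
  exact add_right_inj (α * x)

theorem eq_div_sum_of_eq_mul_of_sum_eq_one {K ι : Type*} [Field K] [Fintype ι] {α w : ι → K}
    {c : K} (hα : ∀ i, α i = c * w i) (hsum : ∑ i, α i = 1) (i : ι) :
    α i = w i / ∑ j, w j := by
  have hcw : c * ∑ j, w j = 1 := by simpa [Finset.mul_sum, hα] using hsum
  rw [hα i, eq_div_iff (right_ne_zero_of_mul_eq_one hcw), mul_right_comm, hcw, one_mul]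

theorem stmt7_general {n : ℕ} (R : Matrix (Fin n) (Fin n) ℝ) (r x α : Fin n → ℝ)
    (hsimple : R.charpoly.rootMultiplicity 1 = 1)
    (hr : r ᵥ* R = r) (hrpos : ∀ i, 0 < r i)
    (hx0 : ∀ i, 0 ≤ x i) (hx1 : ∑ i, x i = 1)
    (hxv : ∀ i : Fin n, x ≠ Pi.single i 1)
    (hαeig : α ᵥ* (Matrix.diagonal x + (1 - Matrix.diagonal x) * R) = α)
    (hαnorm : ∑ i, α i = 1) :
    ∀ i, α i = (r i / (1 - x i)) / ∑ j, r j / (1 - x j) := by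
  intro i
  have hr0 : r ≠ 0 := fun h => (hrpos i).ne' (congrFun h i)
  obtain ⟨c, hc⟩ := exists_eq_smul_of_vecMul_eq_self hsimple hr0 hr
    ((vecMul_diagonal_add_one_sub_diagonal_mul_eq_self_iff R x α).mp hαeig)
  have hα : ∀ j, α j = c * (r j / (1 - x j)) := fun j => by
    have hxj : 1 - x j ≠ 0 := (sub_pos.mpr (apply_lt_one_of_mem_stdSimplex ⟨hx0, hx1⟩ (hxv j))).ne'
    rw [mul_div_assoc', eq_div_iff hxj]
    simpa using congrFun hc j
  exact eq_div_sum_of_eq_mul_of_sum_eq_one hα hαnorm i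

/-- Explicit formula for the normalized left eigenvector of
W(x) = diag(x) + (I − diag(x))R at a nonvertex point of the simplex. -/
theorem stmt7 {n : ℕ} (R : Matrix (Fin n) (Fin n) ℝ) (r x α : Fin n → ℝ)
    (hrow : R *ᵥ (fun _ => 1) = fun _ => 1)
    (hdiag : ∀ i, R i i = 0)
    (hsimple : R.charpoly.rootMultiplicity 1 = 1)
    (hr : r ᵥ* R = r) (hrpos : ∀ i, 0 < r i) (hrnorm : ∑ i, r i = 1)
    (hx0 : ∀ i, 0 ≤ x i) (hx1 : ∑ i, x i = 1)
    (hxv : ∀ i : Fin n, x ≠ Pi.single i 1)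
    (hαeig : α ᵥ* (Matrix.diagonal x + (1 - Matrix.diagonal x) * R) = α)
    (hαnorm : ∑ i, α i = 1) :
    ∀ i, α i = (r i / (1 - x i)) / ∑ j, r j / (1 - x j) :=
  stmt7_general R r x α hsimple hr hrpos hx0 hx1 hxv hαeig hαnorm
end

section
/- Let r ∈ ℝ^n be strictly positive with Σ_i r_i = 1 and n ≥ 3. Define, for x ∈ Δ_n not a vertex, φ_i(x) := (r_i/(1−x_i)) / Σ_j (r_j/(1−x_j)). If the maximal entry r_max = r_{i_max} satisfies r_{i_max} ≥ 1/2 (the maximizer then being unique), then φ_{i_max}(x) > x_{i_max} for every nonvertex x ∈ Δ_n. -/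
open Matrix

/-- Vertex attraction: if the maximal centrality entry satisfies r_max ≥ 1/2, then
φ_{i_max}(x) > x_{i_max} at every nonvertex point of the simplex. -/
theorem stmt8 {n : ℕ} (hn : 3 ≤ n) (r : Fin n → ℝ)
    (hrpos : ∀ i, 0 < r i) (hrsum : ∑ i, r i = 1)
    (imax : Fin n) (hmax : ∀ j, r j ≤ r imax) (hhalf : 1/2 ≤ r imax)
    (x : Fin n → ℝ) (hx0 : ∀ i, 0 ≤ x i) (hx1 : ∑ i, x i = 1)
    (hxv : ∀ i : Fin n, x ≠ Pi.single i 1) :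
    x imax < (r imax / (1 - x imax)) / ∑ j, r j / (1 - x j) := by
  -- every coordinate is < 1
  have hxlt : ∀ i, x i < 1 := by
    intro i
    rcases lt_or_ge (x i) 1 with h | h
    · exact h
    · exfalso
      have hle : x i ≤ 1 := by
        calc x i ≤ ∑ j, x j := Finset.single_le_sum (fun j _ => hx0 j) (Finset.mem_univ i)
        _ = 1 := hx1
      have hxi : x i = 1 := le_antisymm hle h
      apply hxv i
      funext j
      by_cases hj : j = i
      · subst hj; simp [hxi]
      · have hz : ∑ k ∈ Finset.univ.erase i, x k = 0 := by
          have := Finset.add_sum_erase Finset.univ x (Finset.mem_univ i)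
          rw [hx1, hxi] at this
          linarith
        have : x j = 0 := by
          have hmem : j ∈ Finset.univ.erase i := Finset.mem_erase.2 ⟨hj, Finset.mem_univ j⟩
          have := (Finset.sum_eq_zero_iff_of_nonneg (fun k _ => hx0 k)).1 hz j hmem
          exact this
        simp [this, Pi.single_apply, hj]
  have h1x : ∀ i, 0 < 1 - x i := fun i => by linarith [hxlt i]
  have hterm : ∀ i, 0 < r i / (1 - x i) := fun i => div_pos (hrpos i) (h1x i)
  have hS : 0 < ∑ j, r j / (1 - x j) :=
    Finset.sum_pos (fun j _ => hterm j) ⟨imax, Finset.mem_univ imax⟩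
  rw [lt_div_iff₀ hS]
  -- split the sum
  have hsplit : ∑ j, r j / (1 - x j)
      = r imax / (1 - x imax) + ∑ j ∈ Finset.univ.erase imax, r j / (1 - x j) :=
    (Finset.add_sum_erase Finset.univ _ (Finset.mem_univ imax)).symm
  rw [hsplit, mul_add]
  -- pairwise bound: for j ≠ imax, x imax + x j ≤ 1
  have hpair : ∀ j, j ≠ imax → x imax + x j ≤ 1 := by
    intro j hj
    have hsub : ({imax, j} : Finset (Fin n)) ⊆ Finset.univ := Finset.subset_univ _
    have := Finset.sum_le_sum_of_subset_of_nonneg hsub (fun k _ _ => hx0 k)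
    rw [Finset.sum_pair (Ne.symm hj), hx1] at this
    exact this
  -- existence of j with strict inequality
  have hex : ∃ j ∈ Finset.univ.erase imax, x j < 1 - x imax := by
    by_contra hc
    push_neg at hc
    have hcard : (Finset.univ.erase imax).card = n - 1 := by
      simp [Finset.card_erase_of_mem]
    have hge : ∑ j ∈ Finset.univ.erase imax, (1 - x imax) ≤
        ∑ j ∈ Finset.univ.erase imax, x j :=
      Finset.sum_le_sum (fun j hj => hc j hj)
    rw [Finset.sum_const, hcard, nsmul_eq_mul] at hge
    have hsum' : ∑ j ∈ Finset.univ.erase imax, x j = 1 - x imax := by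
      have := Finset.add_sum_erase Finset.univ x (Finset.mem_univ imax)
      rw [hx1] at this; linarith
    rw [hsum'] at hge
    have hn2 : (2 : ℝ) ≤ (n - 1 : ℕ) := by
      have : 2 ≤ n - 1 := by omega
      exact_mod_cast this
    nlinarith [h1x imax]
  obtain ⟨j0, hj0mem, hj0⟩ := hex
  -- strict sum bound
  have hkey : x imax * ∑ j ∈ Finset.univ.erase imax, r j / (1 - x j)
      < ∑ j ∈ Finset.univ.erase imax, r j := by
    rw [Finset.mul_sum]
    apply Finset.sum_lt_sum
    · intro j hj
      have hjne : j ≠ imax := (Finset.mem_erase.1 hj).1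
      have hle : x imax ≤ 1 - x j := by linarith [hpair j hjne]
      calc x imax * (r j / (1 - x j)) ≤ (1 - x j) * (r j / (1 - x j)) :=
            mul_le_mul_of_nonneg_right hle (le_of_lt (hterm j))
        _ = r j := by rw [mul_comm]; exact div_mul_cancel₀ _ (ne_of_gt (h1x j))
    · refine ⟨j0, hj0mem, ?_⟩
      have hlt : x imax < 1 - x j0 := by linarith
      calc x imax * (r j0 / (1 - x j0)) < (1 - x j0) * (r j0 / (1 - x j0)) :=
            mul_lt_mul_of_pos_right hlt (hterm j0)
        _ = r j0 := by rw [mul_comm]; exact div_mul_cancel₀ _ (ne_of_gt (h1x j0))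
  have hrsum' : ∑ j ∈ Finset.univ.erase imax, r j = 1 - r imax := by
    have := Finset.add_sum_erase Finset.univ r (Finset.mem_univ imax)
    rw [hrsum] at this; linarith
  have hfinal : x imax * ∑ j ∈ Finset.univ.erase imax, r j / (1 - x j) < r imax := by
    rw [hrsum'] at hkey; linarith
  have hm : x imax * (r imax / (1 - x imax)) + r imax = r imax / (1 - x imax) := by
    have h0 : (1 - x imax) ≠ 0 := ne_of_gt (h1x imax)
    field_simp
    ring
  linarith
end

section
/- Let n ≥ 3 and r ∈ ℝ^n strictly positive with Σ r_i = 1 and a unique maximizer with maximal entry r_max. If r_max ≤ (n−1)/(3n−4), then Σ_{i=1}^n (1/2)(1 − √(1 − r_i/r_max)) ≥ 1. -/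
open Matrix

/-- Explicit sufficient condition for pluralism: if r_max ≤ (n−1)/(3n−4), the
small-branch quantity ℓ(κ_max) is at least 1. -/
theorem stmt14 {n : ℕ} (hn : 3 ≤ n) (r : Fin n → ℝ)
    (hrpos : ∀ i, 0 < r i) (hrsum : ∑ i, r i = 1)
    (imax : Fin n) (hmax : ∀ j, j ≠ imax → r j < r imax)
    (hbound : r imax ≤ ((n:ℝ) - 1)/(3*(n:ℝ) - 4)) :
    1 ≤ ∑ i, (1/2) * (1 - Real.sqrt (1 - r i / r imax)) := by
  have hM : 0 < r imax := hrpos imax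
  have hn3 : (3:ℝ) ≤ (n:ℝ) := by exact_mod_cast hn
  set R := r imax with hR
  set s := Finset.univ.erase imax with hs
  have hcard : (s.card : ℝ) = (n:ℝ) - 1 := by
    rw [hs, Finset.card_erase_of_mem (Finset.mem_univ _), Finset.card_univ, Fintype.card_fin]
    have : 1 ≤ n := by omega
    push_cast [Nat.cast_sub this]
    ring
  have hsplit : R + ∑ j ∈ s, r j = 1 := by
    rw [hs]
    rw [Finset.add_sum_erase Finset.univ r (Finset.mem_univ imax)]
    exact hrsum
  have ha_nonneg : ∀ j ∈ s, 0 ≤ 1 - r j / R := by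
    intro j hj
    have hjne : j ≠ imax := Finset.ne_of_mem_erase hj
    have := hmax j hjne
    have : r j / R < 1 := (div_lt_one hM).mpr this
    linarith
  -- sum of a_j
  have hsa : ∑ j ∈ s, (1 - r j / R) = ((n:ℝ) - 1) - (1 - R)/R := by
    rw [Finset.sum_sub_distrib, ← Finset.sum_div, Finset.sum_const, nsmul_eq_mul]
    have : ∑ j ∈ s, r j = 1 - R := by linarith
    rw [this, hcard]; ring
  set T := ∑ j ∈ s, Real.sqrt (1 - r j / R) with hT
  have hT0 : 0 ≤ T := Finset.sum_nonneg fun j hj => Real.sqrt_nonneg _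
  have hCS : T ^ 2 ≤ ((n:ℝ) - 1) * (((n:ℝ) - 1) - (1 - R)/R) := by
    have h := sq_sum_le_card_mul_sum_sq (s := s) (f := fun j => Real.sqrt (1 - r j / R))
    have h2 : ∑ j ∈ s, Real.sqrt (1 - r j / R) ^ 2 = ∑ j ∈ s, (1 - r j / R) :=
      Finset.sum_congr rfl fun j hj => Real.sq_sqrt (ha_nonneg j hj)
    rw [h2, hsa] at h
    calc T ^ 2 ≤ (s.card : ℝ) * (((n:ℝ) - 1) - (1 - R)/R) := h
      _ = ((n:ℝ) - 1) * (((n:ℝ) - 1) - (1 - R)/R) := by rw [hcard]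
  -- bound from hbound
  have hden : (0:ℝ) < 3*(n:ℝ) - 4 := by linarith
  have hRb : R * (3*(n:ℝ) - 4) ≤ (n:ℝ) - 1 := by
    rw [le_div_iff₀ hden] at hbound; exact hbound
  have hfrac : ((n:ℝ) - 1) * ((1 - R)/R) ≥ 2*(n:ℝ) - 3 := by
    rw [ge_iff_le, mul_div_assoc' , le_div_iff₀ hM]
    nlinarith
  have hTle : T ≤ (n:ℝ) - 2 := by
    have hsq : T ^ 2 ≤ ((n:ℝ) - 2) ^ 2 := by nlinarith
    nlinarith
  -- split the main sum
  have hsum : ∑ i, (1/2 : ℝ) * (1 - Real.sqrt (1 - r i / R)) =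
      (1/2 : ℝ) * (1 - Real.sqrt (1 - R / R)) +
      ∑ j ∈ s, (1/2 : ℝ) * (1 - Real.sqrt (1 - r j / R)) := by
    exact (Finset.add_sum_erase Finset.univ
      (fun i => (1/2:ℝ) * (1 - Real.sqrt (1 - r i / R))) (Finset.mem_univ imax)).symm
  rw [hsum, div_self hM.ne', sub_self, Real.sqrt_zero]
  have : ∑ j ∈ s, (1/2 : ℝ) * (1 - Real.sqrt (1 - r j / R)) =
      (1/2 : ℝ) * (((n:ℝ) - 1) - T) := by
    rw [← Finset.mul_sum, Finset.sum_sub_distrib, Finset.sum_const, nsmul_eq_mul, hcard, hT]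
    ring
  rw [this]
  linarith
end

section
/- Let r ∈ ℝ^n be strictly positive with Σ r_i = 1, and let x* ∈ int Δ_n, κ* > 0 satisfy x*_i(1 − x*_i) = κ* r_i with x*_i < 1/2 for all i. Define the Jacobian J := κ*·(diag(a) − x*·a^T) with a_j := r_j/(1 − x*_j)². Then the induced ℓ1 operator norm satisfies ‖J‖₁ = 2·max_j x*_j < 1. -/
open Matrix

/-- The Jacobian at a small-branch interior equilibrium has ℓ1 operator norm
(maximum absolute column sum) 2·max_j x*_j < 1. -/
theorem stmt15 {n : ℕ} (hn : 0 < n) (r xs : Fin n → ℝ) (κ : ℝ)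
    (hrpos : ∀ i, 0 < r i) (hrsum : ∑ i, r i = 1)
    (hxpos : ∀ i, 0 < xs i) (hxsum : ∑ i, xs i = 1)
    (hκ : 0 < κ) (heq : ∀ i, xs i * (1 - xs i) = κ * r i)
    (hhalf : ∀ i, xs i < 1/2)
    (J : Matrix (Fin n) (Fin n) ℝ)
    (hJ : ∀ i j, J i j = κ * ((if i = j then r i / (1 - xs i)^2 else 0)
        - xs i * (r j / (1 - xs j)^2))) :
    (⨆ j, ∑ i, |J i j|) = 2 * (⨆ j, xs j) ∧ (⨆ j, ∑ i, |J i j|) < 1 := by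
  haveI : Nonempty (Fin n) := ⟨⟨0, hn⟩⟩
  have hx1 : ∀ i, (0:ℝ) < 1 - xs i := by
    intro i; nlinarith [hhalf i, hxpos i]
  have ha : ∀ j, κ * (r j / (1 - xs j)^2) = xs j / (1 - xs j) := by
    intro j
    have hne := (hx1 j).ne'
    have h := heq j
    field_simp
    nlinarith [hx1 j]
  have hcol : ∀ j, ∑ i, |J i j| = 2 * xs j := by
    intro j
    have hJval : ∀ i, |J i j| = (if i = j then xs j else xs i * (xs j / (1 - xs j))) := by
      intro i
      rw [hJ i j]
      by_cases h : i = j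
      · subst h
        rw [if_pos rfl, show κ * (r i / (1 - xs i) ^ 2 - xs i * (r i / (1 - xs i) ^ 2))
            = κ * (r i / (1 - xs i) ^ 2) * (1 - xs i) by ring, ha i,
          div_mul_cancel₀ _ (hx1 i).ne', abs_of_pos (hxpos i), if_pos rfl]
      · simp only [if_neg h]
        rw [mul_sub, mul_comm (xs i) _, ← mul_assoc, ha j]
        have hpos : 0 < xs j / (1 - xs j) * xs i :=
          mul_pos (div_pos (hxpos j) (hx1 j)) (hxpos i)
        rw [mul_zero, zero_sub, abs_neg, abs_of_pos hpos]; ring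
    calc ∑ i, |J i j| = ∑ i, (if i = j then xs j else xs i * (xs j / (1 - xs j))) := by
          exact Finset.sum_congr rfl fun i _ => hJval i
      _ = xs j + ∑ i ∈ Finset.univ.erase j, xs i * (xs j / (1 - xs j)) := by
          rw [← Finset.add_sum_erase _ _ (Finset.mem_univ j), if_pos rfl]
          congr 1
          exact Finset.sum_congr rfl fun i hi => by
            rw [if_neg (Finset.ne_of_mem_erase hi)]
      _ = xs j + (1 - xs j) * (xs j / (1 - xs j)) := by
          rw [← Finset.sum_mul]
          congr 2
          have := Finset.add_sum_erase Finset.univ xs (Finset.mem_univ j)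
          rw [hxsum] at this
          linarith
      _ = 2 * xs j := by
          rw [mul_div_cancel₀ _ (hx1 j).ne']; ring
  have h1 : (⨆ j, ∑ i, |J i j|) = ⨆ j, 2 * xs j := by
    congr 1; funext j; exact hcol j
  have h2 : (⨆ j, 2 * xs j) = 2 * ⨆ j, xs j := by
    rw [Real.mul_iSup_of_nonneg (by norm_num)]
  have hbdd : BddAbove (Set.range xs) := (Set.finite_range xs).bddAbove
  have h3 : (⨆ j, xs j) < 1/2 := by
    obtain ⟨j, hj⟩ := exists_eq_ciSup_of_finite (f := xs)
    rw [← hj]; exact hhalf j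
  constructor
  · rw [h1, h2]
  · rw [h1, h2]; linarith
end
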